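/- arXiv:2402.09807 — 10 statements merged into one kernel-verified Lean document; each statement's English description precedes it below -/
import Mathlib

section
/- Suppose f : ℝⁿ × ℝᵐ → ℝ is ℓ-smooth (its gradient is ℓ-Lipschitz) and for each x the function y ↦ f(x,y) is μ-strongly concave with μ > 0. Then the map x ↦ y*(x) := argmax_y f(x,y) is well-defined and Lipschitz continuous with constant κ = ℓ/μ. -/
/-!
Restricted to the segment from `y` to `y'`, strong concavity of a slice `h = f(x, ·)` gives
the growth bound `h y' + μ/2 ‖y' - y‖² ≤ h y + Dh(y)(y' - y)`. At `y = 0` it makes `h` tend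
to `-∞`, so a maximizer exists in finite dimension, and it is unique since `h` is strictly
concave. Applied at `y*(x)` and `y*(x')`, where the partial `y`-derivatives vanish, it gives
`μ ‖y*(x) - y*(x')‖² ≤ ⟪∇f(x, y*(x')) - ∇f(x', y*(x')), (0, y*(x) - y*(x'))⟫`,
which the `ℓ`-Lipschitz gradient bounds by `ℓ ‖x - x'‖ ‖y*(x) - y*(x')‖`.
-/

open scoped RealInnerProductSpace
open Filter Set WithLp

lemma ConcaveOn.le_add_of_hasFDerivAt {E : Type*} [NormedAddCommGroup E]
    [NormedSpace ℝ E] {g : E → ℝ} (hg : ConcaveOn ℝ univ g) {D : E →L[ℝ] ℝ} {x : E}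
    (hD : HasFDerivAt g D x) (y : E) : g y ≤ g x + D (y - x) := by
  set φ : ℝ → ℝ := g ∘ AffineMap.lineMap x y
  have hφ : ConcaveOn ℝ univ φ := hg.comp_affineMap _
  have hD₀ : HasFDerivAt g D (AffineMap.lineMap x y (0 : ℝ)) := by simpa using hD
  have hφ' : HasDerivAt φ (D (y - x)) 0 := hD₀.comp_hasDerivAt 0 AffineMap.hasDerivAt_lineMap
  have hslope := hφ.slope_le_of_hasDerivAt (mem_univ 0) (mem_univ 1) zero_lt_one hφ'
  simp only [φ, slope_def_field, Function.comp_apply, AffineMap.lineMap_apply_one,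
    AffineMap.lineMap_apply_zero, sub_zero, div_one] at hslope
  linarith

lemma HasFDerivAt.comp_toLp_prodMk_right {E F : Type*} [NormedAddCommGroup E] [NormedSpace ℝ E]
    [NormedAddCommGroup F] [NormedSpace ℝ F] {f : WithLp 2 (E × F) → ℝ}
    {D : WithLp 2 (E × F) →L[ℝ] ℝ} {x : E} {y : F} (hf : HasFDerivAt f D (toLp 2 (x, y))) :
    HasFDerivAt (fun y => f (toLp 2 (x, y)))
      (D ∘L (prodContinuousLinearEquiv 2 ℝ E F).symm.toContinuousLinearMap ∘L
        ContinuousLinearMap.inr ℝ E F) y :=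
  hf.comp y <| (prodContinuousLinearEquiv 2 ℝ E F).symm.hasFDerivAt.comp y
    (hasFDerivAt_prodMk_right x y)

lemma norm_toLp_sub_toLp_same_snd {E F : Type*} [SeminormedAddCommGroup E]
    [SeminormedAddCommGroup F] (x x' : E) (y : F) :
    ‖toLp 2 (x, y) - toLp 2 (x', y)‖ = ‖x - x'‖ := by
  rw [← toLp_sub, Prod.mk_sub_mk, sub_self, norm_toLp_fst]

section InnerProductSpace

variable {E F : Type*} [NormedAddCommGroup E] [InnerProductSpace ℝ E] [NormedAddCommGroup F]
  [InnerProductSpace ℝ F] {μ : ℝ} {h : F → ℝ}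

lemma StrongConcaveOn.add_le_add_of_hasFDerivAt (hh : StrongConcaveOn univ μ h)
    {D : F →L[ℝ] ℝ} {x : F} (hD : HasFDerivAt h D x) (y : F) :
    h y + μ / 2 * ‖y - x‖ ^ 2 ≤ h x + D (y - x) := by
  have key := (strongConcaveOn_iff_convex.mp hh).le_add_of_hasFDerivAt
    (hD.add ((hasStrictFDerivAt_norm_sq x).hasFDerivAt.const_mul (μ / 2))) y
  simp only [add_apply, smul_apply, coe_innerSL_apply, nsmul_eq_mul, Nat.cast_ofNat,
    smul_eq_mul, inner_sub_right, real_inner_self_eq_norm_sq] at key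
  rw [norm_sub_sq_real, real_inner_comm]
  linarith

lemma StrongConcaveOn.tendsto_cocompact_atBot [ProperSpace F]
    (hh : StrongConcaveOn univ μ h) (hμ : 0 < μ) {D : F →L[ℝ] ℝ} (hD : HasFDerivAt h D 0) :
    Tendsto h (cocompact F) atBot := by
  have hbound : ∀ y, h y ≤ h 0 + ‖y‖ * (‖D‖ + -(μ / 2) * ‖y‖) := fun y => by
    have := hh.add_le_add_of_hasFDerivAt hD y
    simp only [sub_zero] at this
    nlinarith [le_of_abs_le (D.le_opNorm y)]
  refine tendsto_atBot_mono hbound (tendsto_atBot_add_const_left _ _ ?_)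
  refine Tendsto.comp (f := norm) (g := fun r => r * (‖D‖ + -(μ / 2) * r)) ?_
    tendsto_norm_cocompact_atTop
  exact tendsto_id.atTop_mul_atBot₀ (tendsto_atBot_add_const_left _ _
    (tendsto_id.const_mul_atTop_of_neg (by linarith)))

lemma StrongConcaveOn.existsUnique_isMaxOn [ProperSpace F]
    (hh : StrongConcaveOn univ μ h) (hμ : 0 < μ) (hd : Differentiable ℝ h) :
    ∃! y, IsMaxOn h univ y := by
  obtain ⟨y, hy⟩ := hd.continuous.exists_forall_ge
    (hh.tendsto_cocompact_atBot hμ (hd 0).hasFDerivAt)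
  exact ⟨y, fun z _ => hy z, fun z hz =>
    (hh.strictConcaveOn hμ).eq_of_isMaxOn hz (fun w _ => hy w) (mem_univ z) (mem_univ y)⟩

lemma StrongConcaveOn.mul_norm_sub_sq_le_of_isMaxOn (hh : StrongConcaveOn univ μ h)
    {y₁ y₂ : F} (hmax : IsMaxOn h univ y₁) (hd₁ : DifferentiableAt ℝ h y₁)
    {D : F →L[ℝ] ℝ} (hD : HasFDerivAt h D y₂) :
    μ * ‖y₁ - y₂‖ ^ 2 ≤ D (y₁ - y₂) := by
  have hcrit : fderiv ℝ h y₁ = 0 := (hmax.isLocalMax univ_mem).fderiv_eq_zero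
  have at₁ := hh.add_le_add_of_hasFDerivAt hd₁.hasFDerivAt y₂
  have at₂ := hh.add_le_add_of_hasFDerivAt hD y₁
  rw [hcrit, norm_sub_rev] at at₁
  simp only [zero_apply] at at₁
  linarith

theorem StrongConcaveOn.norm_sub_le_of_isMaxOn_slice [CompleteSpace E] [CompleteSpace F]
    {f : WithLp 2 (E × F) → ℝ} (hμ : 0 < μ) (hf : Differentiable ℝ f) {x x' : E}
    (hconc : StrongConcaveOn univ μ (fun y => f (toLp 2 (x, y)))) {y y' : F}
    (hy : IsMaxOn (fun y => f (toLp 2 (x, y))) univ y)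
    (hy' : IsMaxOn (fun y => f (toLp 2 (x', y))) univ y') :
    ‖y - y'‖ ≤ ‖gradient f (toLp 2 (x, y')) - gradient f (toLp 2 (x', y'))‖ / μ := by
  set G := gradient f (toLp 2 (x, y')) - gradient f (toLp 2 (x', y'))
  set d := y - y'
  have hgrowth : μ * ‖d‖ ^ 2 ≤ fderiv ℝ f (toLp 2 (x, y')) (toLp 2 (0, d)) :=
    hconc.mul_norm_sub_sq_le_of_isMaxOn hy
      (hf _).hasFDerivAt.comp_toLp_prodMk_right.differentiableAt
      (hf _).hasFDerivAt.comp_toLp_prodMk_right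
  have hcrit : fderiv ℝ f (toLp 2 (x', y')) (toLp 2 (0, d)) = 0 :=
    congr($((hy'.isLocalMax univ_mem).hasFDerivAt_eq_zero
      (hf _).hasFDerivAt.comp_toLp_prodMk_right) d)
  have hquad : μ * ‖d‖ ^ 2 ≤ ‖G‖ * ‖d‖ :=
    calc μ * ‖d‖ ^ 2 ≤ ⟪G, toLp 2 (0, d)⟫ := by
          rwa [inner_sub_left, inner_gradient_left, inner_gradient_left, hcrit, sub_zero]
      _ ≤ ‖G‖ * ‖toLp 2 ((0 : E), d)‖ := real_inner_le_norm _ _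
      _ = ‖G‖ * ‖d‖ := by rw [norm_toLp_snd]
  rw [le_div_iff₀ hμ]
  nlinarith [norm_nonneg d, norm_nonneg G]

end InnerProductSpace

theorem stmt2_general {n m : ℕ} (ℓ μ : ℝ) (hμ : 0 < μ)
    (f : WithLp 2 (EuclideanSpace ℝ (Fin n) × EuclideanSpace ℝ (Fin m)) → ℝ)
    (hdiff : ContDiff ℝ 2 f)
    (hlip : ∀ z z', ‖gradient f z - gradient f z'‖ ≤ ℓ * ‖z - z'‖)
    (hconc : ∀ x, StrongConcaveOn Set.univ μ
      (fun y => f ((WithLp.equiv 2 (EuclideanSpace ℝ (Fin n) × EuclideanSpace ℝ (Fin m))).symm (x, y)))) :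
    (∀ x, ∃! y, IsMaxOn
        (fun y => f ((WithLp.equiv 2 (EuclideanSpace ℝ (Fin n) × EuclideanSpace ℝ (Fin m))).symm (x, y)))
        Set.univ y) ∧
    ∀ ystar : EuclideanSpace ℝ (Fin n) → EuclideanSpace ℝ (Fin m),
      (∀ x, IsMaxOn
        (fun y => f ((WithLp.equiv 2 (EuclideanSpace ℝ (Fin n) × EuclideanSpace ℝ (Fin m))).symm (x, y)))
        Set.univ (ystar x)) →
      ∀ x x', ‖ystar x - ystar x'‖ ≤ (ℓ / μ) * ‖x - x'‖ := by
  have hfd : Differentiable ℝ f := hdiff.differentiable (by norm_num)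
  refine ⟨fun x => (hconc x).existsUnique_isMaxOn hμ fun y =>
    (hfd _).hasFDerivAt.comp_toLp_prodMk_right.differentiableAt, fun ystar hstar x x' => ?_⟩
  calc ‖ystar x - ystar x'‖
      ≤ ‖gradient f (toLp 2 (x, ystar x')) - gradient f (toLp 2 (x', ystar x'))‖ / μ :=
        (hconc x).norm_sub_le_of_isMaxOn_slice hμ hfd (hstar x) (hstar x')
    _ ≤ ℓ * ‖x - x'‖ / μ := by
        gcongr
        rw [← norm_toLp_sub_toLp_same_snd x x' (ystar x')]
        exact hlip _ _
    _ = ℓ / μ * ‖x - x'‖ := by ring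

/-- If `f` is `ℓ`-smooth on `ℝⁿ × ℝᵐ` and `μ`-strongly concave in `y`, then the
argmax map `y*(x)` is well-defined and `κ = ℓ/μ` Lipschitz. -/
theorem stmt2 {n m : ℕ} (ℓ μ : ℝ) (hμ : 0 < μ) (hℓ : μ ≤ ℓ)
    (f : WithLp 2 (EuclideanSpace ℝ (Fin n) × EuclideanSpace ℝ (Fin m)) → ℝ)
    (hdiff : ContDiff ℝ 2 f)
    (hlip : ∀ z z', ‖gradient f z - gradient f z'‖ ≤ ℓ * ‖z - z'‖)
    (hconc : ∀ x, StrongConcaveOn Set.univ μ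
      (fun y => f ((WithLp.equiv 2 (EuclideanSpace ℝ (Fin n) × EuclideanSpace ℝ (Fin m))).symm (x, y)))) :
    (∀ x, ∃! y, IsMaxOn
        (fun y => f ((WithLp.equiv 2 (EuclideanSpace ℝ (Fin n) × EuclideanSpace ℝ (Fin m))).symm (x, y)))
        Set.univ y) ∧
    ∀ ystar : EuclideanSpace ℝ (Fin n) → EuclideanSpace ℝ (Fin m),
      (∀ x, IsMaxOn
        (fun y => f ((WithLp.equiv 2 (EuclideanSpace ℝ (Fin n) × EuclideanSpace ℝ (Fin m))).symm (x, y)))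
        Set.univ (ystar x)) →
      ∀ x x', ‖ystar x - ystar x'‖ ≤ (ℓ / μ) * ‖x - x'‖ :=
  stmt2_general ℓ μ hμ f hdiff hlip hconc
end

section
/- Let P : ℝⁿ → ℝ be twice differentiable with H_L-Lipschitz Hessian. Suppose g, H approximate ∇P(x), ∇²P(x) with ‖∇P(x) − g‖ ≤ ε/12 and ‖∇²P(x) − H‖ ≤ √(ε·H_L)/6, and s, λ satisfy the trust-region optimality conditions g + (H + (λH_L/2))s = 0, H + (λH_L/2)I ⪰ 0, ‖s‖ = √(ε/H_L) with λ ≥ 2√(ε/H_L). Then P(x+s) − P(x) ≤ −(1/6)ε^{3/2}/√(H_L). -/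
open scoped RealInnerProductSpace

/-!
Taylor's theorem with an `L`-Lipschitz Hessian gives
`P (x + s) - P x ≤ ⟪∇P x, s⟫ + ½ ⟪∇²P x s, s⟫ + L ‖s‖³ / 6`. Passing to the inexact model with
`g, H` costs `‖∇P x - g‖ ‖s‖ + ½ ‖∇²P x - H‖ ‖s‖²`, and the trust-region conditions bound that model
by `-(c / 2) ‖s‖²` with `c = λ L / 2 ≥ √(ε L)`. For `‖s‖ = √(ε / L)` the four terms are
`-1/2, 1/12, 1/12, 1/6` times `ε^{3/2} / √L`.
-/

open Set in
lemma norm_le_mul_pow_succ_div_of_norm_deriv_le {F : Type*} [NormedAddCommGroup F]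
    [NormedSpace ℝ F] {φ φ' : ℝ → F} {C : ℝ} (k : ℕ) (h0 : φ 0 = 0)
    (hφ : ∀ t, HasDerivAt φ (φ' t) t) (hbound : ∀ t ∈ Ico (0 : ℝ) 1, ‖φ' t‖ ≤ C * t ^ k)
    {t : ℝ} (ht : t ∈ Icc (0 : ℝ) 1) : ‖φ t‖ ≤ C * t ^ (k + 1) / (k + 1) := by
  have hB : ∀ t : ℝ, HasDerivAt (fun t => C * t ^ (k + 1) / (k + 1)) (C * t ^ k) t := fun t ↦
    (((hasDerivAt_pow (k + 1) t).const_mul C).div_const _).congr_deriv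
      (by field_simp; push_cast; ring)
  exact image_norm_le_of_norm_deriv_right_le_deriv_boundary
    (fun t _ ↦ (hφ t).continuousAt.continuousWithinAt) (fun t _ ↦ (hφ t).hasDerivWithinAt)
    (by simp [h0]) hB hbound ht

section Taylor

variable {E F : Type*} [NormedAddCommGroup E] [NormedSpace ℝ E] [NormedAddCommGroup F]
  [NormedSpace ℝ F] {f : E → F} {f' : E → E →L[ℝ] F} {L : ℝ}

lemma norm_sub_sub_smul_fderiv_le (hf : ∀ x, HasFDerivAt f (f' x) x)
    (hlip : ∀ a b, ‖f' a - f' b‖ ≤ L * ‖a - b‖) (x s : E) {t : ℝ} (ht : t ∈ Set.Icc (0 : ℝ) 1) :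
    ‖f (x + t • s) - f x - t • f' x s‖ ≤ L * ‖s‖ ^ 2 * t ^ 2 / 2 := by
  have hline : ∀ t : ℝ, HasDerivAt (fun t : ℝ => x + t • s) s t := fun t ↦ by
    simpa using ((hasDerivAt_id t).smul_const s).const_add x
  have hderiv : ∀ t : ℝ, HasDerivAt (fun t => f (x + t • s) - f x - t • f' x s)
      (f' (x + t • s) s - f' x s) t := fun t ↦
    (((hf _).comp_hasDerivAt t (hline t)).sub_const _).sub
      (by simpa using (hasDerivAt_id t).smul_const (f' x s))
  refine (norm_le_mul_pow_succ_div_of_norm_deriv_le (C := L * ‖s‖ ^ 2) 1 (by simp) hderiv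
    (fun t ht ↦ ?_) ht).trans_eq (by norm_num)
  calc ‖f' (x + t • s) s - f' x s‖ ≤ ‖f' (x + t • s) - f' x‖ * ‖s‖ :=
        (f' (x + t • s) - f' x).le_opNorm s
    _ ≤ L * (t * ‖s‖) * ‖s‖ := by
        gcongr
        simpa [norm_smul, abs_of_nonneg ht.1] using hlip (x + t • s) x
    _ = L * ‖s‖ ^ 2 * t ^ 1 := by ring

end Taylor

section QuadraticModel

variable {E : Type*} [NormedAddCommGroup E] [InnerProductSpace ℝ E]

noncomputable def quadModel (g : E) (H : E →L[ℝ] E) (s : E) : ℝ := ⟪g, s⟫ + ⟪H s, s⟫ / 2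

lemma abs_sub_sub_quadModel_le [CompleteSpace E] {P : E → ℝ} {gP : E → E}
    {hessP : E → E →L[ℝ] E} {L : ℝ} (hgrad : ∀ x, HasGradientAt P (gP x) x)
    (hhess : ∀ x, HasFDerivAt gP (hessP x) x) (hlip : ∀ a b, ‖hessP a - hessP b‖ ≤ L * ‖a - b‖)
    (x s : E) : |P (x + s) - P x - quadModel (gP x) (hessP x) s| ≤ L * ‖s‖ ^ 3 / 6 := by
  have hline : ∀ t : ℝ, HasDerivAt (fun t : ℝ => x + t • s) s t := fun t ↦ by
    simpa using ((hasDerivAt_id t).smul_const s).const_add x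
  have hderiv : ∀ t : ℝ, HasDerivAt
      (fun t => P (x + t • s) - P x - t * ⟪gP x, s⟫ - t ^ 2 / 2 * ⟪hessP x s, s⟫)
      ⟪gP (x + t • s) - gP x - t • hessP x s, s⟫ t := by
    intro t
    have hP : HasDerivAt (fun t => P (x + t • s)) ⟪gP (x + t • s), s⟫ t := by
      simpa [Function.comp_def] using (hgrad _).hasFDerivAt.comp_hasDerivAt t (hline t)
    refine (((hP.sub_const (P x)).sub ((hasDerivAt_id t).mul_const ⟪gP x, s⟫)).sub
      (((hasDerivAt_pow 2 t).div_const 2).mul_const ⟪hessP x s, s⟫)).congr_deriv ?_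
    simp only [inner_sub_left, real_inner_smul_left]
    push_cast
    ring
  have hbound : ∀ t ∈ Set.Ico (0 : ℝ) 1,
      ‖⟪gP (x + t • s) - gP x - t • hessP x s, s⟫‖ ≤ L * ‖s‖ ^ 3 / 2 * t ^ 2 := fun t ht ↦
    calc ‖⟪gP (x + t • s) - gP x - t • hessP x s, s⟫‖
        ≤ ‖gP (x + t • s) - gP x - t • hessP x s‖ * ‖s‖ := norm_inner_le_norm _ _
      _ ≤ L * ‖s‖ ^ 2 * t ^ 2 / 2 * ‖s‖ := by
          gcongr; exact norm_sub_sub_smul_fderiv_le hhess hlip x s (Set.Ico_subset_Icc_self ht)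
      _ = L * ‖s‖ ^ 3 / 2 * t ^ 2 := by ring
  have := norm_le_mul_pow_succ_div_of_norm_deriv_le 2 (by simp) hderiv hbound
    (Set.right_mem_Icc.2 zero_le_one)
  convert this using 1
  · simp only [quadModel, one_smul, one_mul, one_pow, Real.norm_eq_abs]; ring_nf
  · norm_num; ring

lemma quadModel_le_of_trustRegion {g s : E} {H : E →L[ℝ] E} {c : ℝ}
    (hstat : g + (H + c • ContinuousLinearMap.id ℝ E) s = 0)
    (hpsd : 0 ≤ ⟪s, (H + c • ContinuousLinearMap.id ℝ E) s⟫) :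
    quadModel g H s ≤ -(c / 2) * ‖s‖ ^ 2 := by
  simp only [add_apply, smul_apply, ContinuousLinearMap.id_apply] at hstat hpsd
  have hg : g = -(H s + c • s) := eq_neg_of_add_eq_zero_left hstat
  rw [inner_add_right, real_inner_smul_right, real_inner_self_eq_norm_sq] at hpsd
  simp only [quadModel, hg, inner_neg_left, inner_add_left, real_inner_smul_left,
    real_inner_self_eq_norm_sq]
  linarith [real_inner_comm s (H s)]

lemma quadModel_le_quadModel_add (g g' : E) (H H' : E →L[ℝ] E) (s : E) :
    quadModel g H s ≤ quadModel g' H' s + ‖g - g'‖ * ‖s‖ + ‖H - H'‖ / 2 * ‖s‖ ^ 2 := by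
  have hg : ⟪g - g', s⟫ ≤ ‖g - g'‖ * ‖s‖ := real_inner_le_norm _ _
  have hH : ⟪(H - H') s, s⟫ ≤ ‖H - H'‖ * ‖s‖ ^ 2 :=
    calc ⟪(H - H') s, s⟫ ≤ ‖(H - H') s‖ * ‖s‖ := real_inner_le_norm _ _
      _ ≤ ‖H - H'‖ * ‖s‖ * ‖s‖ := by gcongr; exact (H - H').le_opNorm s
      _ = ‖H - H'‖ * ‖s‖ ^ 2 := by ring
  simp only [quadModel, inner_sub_left, sub_apply] at hg hH ⊢
  linarith

end QuadraticModel

lemma trustRegion_decrease_arith {ε L c : ℝ} (hε : 0 ≤ ε) (hL : 0 < L) (hc : √ε * √L ≤ c) :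
    -(c / 2) * (√ε / √L) ^ 2 + ε / 12 * (√ε / √L) + √(ε * L) / 6 / 2 * (√ε / √L) ^ 2
      + L * (√ε / √L) ^ 3 / 6 ≤ -(1 / 6) * √ε ^ 3 / √L := by
  rw [Real.sqrt_mul hε]
  have hε' : ε = √ε ^ 2 := (Real.sq_sqrt hε).symm
  have hL' : L = √L ^ 2 := (Real.sq_sqrt hL.le).symm
  set a := √ε
  set b := √L
  have hb : 0 < b := Real.sqrt_pos.2 hL
  have hcr : a * b * (a / b) ^ 2 ≤ c * (a / b) ^ 2 := by gcongr
  have hab : a * b * (a / b) ^ 2 = a ^ 3 / b := by field_simp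
  have : a ^ 2 / 12 * (a / b) + a * b / 6 / 2 * (a / b) ^ 2 + b ^ 2 * (a / b) ^ 3 / 6
      = a ^ 3 / b / 3 := by field_simp; ring
  rw [hε', hL']
  linear_combination (1 / 2) * hcr + this - (1 / 2) * hab

theorem stmt8_general {n : ℕ} (ε HL lam : ℝ) (hε : 0 < ε) (hHL : 0 < HL)
    (P : EuclideanSpace ℝ (Fin n) → ℝ)
    (gP : EuclideanSpace ℝ (Fin n) → EuclideanSpace ℝ (Fin n))
    (hessP : EuclideanSpace ℝ (Fin n) → (EuclideanSpace ℝ (Fin n) →L[ℝ] EuclideanSpace ℝ (Fin n)))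
    (hgrad : ∀ x, HasGradientAt P (gP x) x)
    (hhess : ∀ x, HasFDerivAt gP (hessP x) x)
    (hlipHess : ∀ a b, ‖hessP a - hessP b‖ ≤ HL * ‖a - b‖)
    (x g s : EuclideanSpace ℝ (Fin n))
    (H : EuclideanSpace ℝ (Fin n) →L[ℝ] EuclideanSpace ℝ (Fin n))
    (hgerr : ‖gP x - g‖ ≤ ε / 12)
    (hHerr : ‖hessP x - H‖ ≤ Real.sqrt (ε * HL) / 6)
    (hkkt1 : g + (H + (lam * HL / 2) • ContinuousLinearMap.id ℝ (EuclideanSpace ℝ (Fin n))) s = 0)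
    (hkkt2 : ∀ v, 0 ≤ ⟪v, (H + (lam * HL / 2) • ContinuousLinearMap.id ℝ (EuclideanSpace ℝ (Fin n))) v⟫)
    (hsnorm : ‖s‖ = Real.sqrt (ε / HL))
    (hlam : lam ≥ 2 * Real.sqrt (ε / HL)) :
    P (x + s) - P x ≤ -(1/6) * ε ^ ((3 : ℝ)/2) / Real.sqrt HL := by
  have hs : ‖s‖ = √ε / √HL := by rw [hsnorm, Real.sqrt_div hε.le]
  have hc : √ε * √HL ≤ lam * HL / 2 := by
    rw [Real.sqrt_div hε.le] at hlam
    calc √ε * √HL = 2 * (√ε / √HL) * √HL ^ 2 / 2 := by field_simp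
      _ ≤ lam * HL / 2 := by rw [Real.sq_sqrt hHL.le]; gcongr
  have hpow : ε ^ ((3 : ℝ) / 2) = √ε ^ 3 := by
    rw [Real.rpow_div_two_eq_sqrt _ hε.le]; exact_mod_cast Real.rpow_natCast _ 3
  have htaylor := (abs_le.1 (abs_sub_sub_quadModel_le hgrad hhess hlipHess x s)).2
  have hmodel := quadModel_le_quadModel_add (gP x) g (hessP x) H s
  have hstep := quadModel_le_of_trustRegion hkkt1 (hkkt2 s)
  have hgerr' : ‖gP x - g‖ * ‖s‖ ≤ ε / 12 * ‖s‖ := by gcongr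
  have hHerr' : ‖hessP x - H‖ / 2 * ‖s‖ ^ 2 ≤ √(ε * HL) / 6 / 2 * ‖s‖ ^ 2 := by gcongr
  have harith := trustRegion_decrease_arith hε.le hHL hc
  rw [← hs] at harith
  rw [hpow]
  linarith

/-- MINIMAX-TR descent: under inexact trust-region optimality conditions with
`λ ≥ 2√(ε/H_L)`, the step gives `P(x+s) − P(x) ≤ −(1/6)ε^{3/2}/√H_L`. -/
theorem stmt8 {n : ℕ} (ε HL lam : ℝ) (hε : 0 < ε) (hHL : 0 < HL)
    (P : EuclideanSpace ℝ (Fin n) → ℝ)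
    (gP : EuclideanSpace ℝ (Fin n) → EuclideanSpace ℝ (Fin n))
    (hessP : EuclideanSpace ℝ (Fin n) → (EuclideanSpace ℝ (Fin n) →L[ℝ] EuclideanSpace ℝ (Fin n)))
    (hgrad : ∀ x, HasGradientAt P (gP x) x)
    (hhess : ∀ x, HasFDerivAt gP (hessP x) x)
    (hlipHess : ∀ a b, ‖hessP a - hessP b‖ ≤ HL * ‖a - b‖)
    (x g s : EuclideanSpace ℝ (Fin n))
    (H : EuclideanSpace ℝ (Fin n) →L[ℝ] EuclideanSpace ℝ (Fin n)) (hsa : IsSelfAdjoint H)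
    (hgerr : ‖gP x - g‖ ≤ ε / 12)
    (hHerr : ‖hessP x - H‖ ≤ Real.sqrt (ε * HL) / 6)
    (hkkt1 : g + (H + (lam * HL / 2) • ContinuousLinearMap.id ℝ (EuclideanSpace ℝ (Fin n))) s = 0)
    (hkkt2 : ∀ v, 0 ≤ ⟪v, (H + (lam * HL / 2) • ContinuousLinearMap.id ℝ (EuclideanSpace ℝ (Fin n))) v⟫)
    (hsnorm : ‖s‖ = Real.sqrt (ε / HL))
    (hlam : lam ≥ 2 * Real.sqrt (ε / HL)) :
    P (x + s) - P x ≤ -(1/6) * ε ^ ((3 : ℝ)/2) / Real.sqrt HL :=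
  stmt8_general ε HL lam hε hHL P gP hessP hgrad hhess hlipHess x g s H hgerr hHerr hkkt1 hkkt2
    hsnorm hlam
end

section
/- Under the setting of the MINIMAX-TR descent lemma, if λ ≤ 2√(ε/H_L), ‖s‖ ≤ √(ε/H_L), g + (H + (λH_L/2))s = 0, ‖∇P(x) − g‖ ≤ ε/12, ‖∇²P(x) − H‖ ≤ √(ε·H_L)/6, and P has H_L-Lipschitz Hessian, then ‖∇P(x+s)‖ ≤ (7/4)ε. -/
/-!
Write `∇P(x+s)` as the sum of the second-order Taylor remainder of `∇P` at `x`, the gradient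
error `∇P(x) - g`, the Hessian error `(∇²P(x) - H) s` and the model residual `g + H s`, which by
the optimality condition equals `-(λ H_L / 2) s`. With `r = √(ε/H_L)` the four terms are at most
`H_L r² / 2 = ε/2`, `ε/12`, `√(ε H_L) r / 6 = ε/6` and `H_L r² = ε`, summing to `7ε/4`.
-/

section TaylorRemainder

variable {E F : Type*} [NormedAddCommGroup E] [NormedSpace ℝ E]
  [NormedAddCommGroup F] [NormedSpace ℝ F]

theorem norm_sub_sub_fderiv_le_of_lipschitz_fderiv {f : E → F} {f' : E → E →L[ℝ] F} {L : ℝ}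
    (hf : ∀ x, HasFDerivAt f (f' x) x) (hlip : ∀ a b, ‖f' a - f' b‖ ≤ L * ‖a - b‖) (x s : E) :
    ‖f (x + s) - f x - f' x s‖ ≤ L / 2 * ‖s‖ ^ 2 := by
  set φ : ℝ → F := fun t => f (x + t • s) - f x - t • f' x s
  have hφ : ∀ t : ℝ, HasDerivAt φ (f' (x + t • s) s - f' x s) t := by
    intro t
    have hline : HasDerivAt (fun t : ℝ => x + t • s) s t := by
      simpa using ((hasDerivAt_id t).smul_const s).const_add x
    exact (((hf _).comp_hasDerivAt t hline).sub_const (f x)).sub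
      (by simpa using (hasDerivAt_id t).smul_const (f' x s))
  have hB : ∀ t : ℝ, HasDerivAt (fun t => L / 2 * ‖s‖ ^ 2 * t ^ 2) (L * ‖s‖ ^ 2 * t) t := by
    intro t
    refine ((hasDerivAt_pow 2 t).const_mul (L / 2 * ‖s‖ ^ 2)).congr_deriv ?_
    norm_num
    ring
  have hφ'_le : ∀ t ∈ Set.Ico (0 : ℝ) 1, ‖f' (x + t • s) s - f' x s‖ ≤ L * ‖s‖ ^ 2 * t := by
    intro t ht
    have hlip_t : ‖f' (x + t • s) - f' x‖ ≤ L * (t * ‖s‖) := by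
      simpa [norm_smul, abs_of_nonneg ht.1] using hlip (x + t • s) x
    calc ‖f' (x + t • s) s - f' x s‖ ≤ ‖f' (x + t • s) - f' x‖ * ‖s‖ :=
          (f' (x + t • s) - f' x).le_opNorm s
      _ ≤ L * (t * ‖s‖) * ‖s‖ := by gcongr
      _ = L * ‖s‖ ^ 2 * t := by ring
  simpa [φ] using image_norm_le_of_norm_deriv_right_le_deriv_boundary
    (fun t _ => (hφ t).continuousAt.continuousWithinAt) (fun t _ => (hφ t).hasDerivWithinAt)
    (by simp [φ]) hB hφ'_le (Set.right_mem_Icc.2 zero_le_one)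

theorem norm_apply_add_le_of_quadratic_model {f : E → F} {f' : E → E →L[ℝ] F} {L : ℝ}
    (hf : ∀ x, HasFDerivAt f (f' x) x) (hlip : ∀ a b, ‖f' a - f' b‖ ≤ L * ‖a - b‖)
    (x s : E) (g : F) (H : E →L[ℝ] F) :
    ‖f (x + s)‖ ≤ L / 2 * ‖s‖ ^ 2 + ‖f x - g‖ + ‖f' x - H‖ * ‖s‖ + ‖g + H s‖ := by
  have hdecomp : f (x + s) = (f (x + s) - f x - f' x s) + (f x - g) + (f' x - H) s + (g + H s) := by
    simp only [sub_apply]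
    abel
  rw [hdecomp]
  refine norm_add₄_le.trans ?_
  gcongr
  · exact norm_sub_sub_fderiv_le_of_lipschitz_fderiv hf hlip x s
  · exact (f' x - H).le_opNorm s

end TaylorRemainder

theorem stmt9_general {n : ℕ} (ε HL lam : ℝ) (hHL : 0 < HL)
    (gP : EuclideanSpace ℝ (Fin n) → EuclideanSpace ℝ (Fin n))
    (hessP : EuclideanSpace ℝ (Fin n) → (EuclideanSpace ℝ (Fin n) →L[ℝ] EuclideanSpace ℝ (Fin n)))
    (hhess : ∀ x, HasFDerivAt gP (hessP x) x)
    (hlipHess : ∀ a b, ‖hessP a - hessP b‖ ≤ HL * ‖a - b‖)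
    (x g s : EuclideanSpace ℝ (Fin n))
    (H : EuclideanSpace ℝ (Fin n) →L[ℝ] EuclideanSpace ℝ (Fin n))
    (hgerr : ‖gP x - g‖ ≤ ε / 12)
    (hHerr : ‖hessP x - H‖ ≤ Real.sqrt (ε * HL) / 6)
    (hkkt1 : g + (H + (lam * HL / 2) • ContinuousLinearMap.id ℝ (EuclideanSpace ℝ (Fin n))) s = 0)
    (hsnorm : ‖s‖ ≤ Real.sqrt (ε / HL))
    (hlam0 : 0 ≤ lam) (hlam : lam ≤ 2 * Real.sqrt (ε / HL)) :
    ‖gP (x + s)‖ ≤ (7/4) * ε := by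
  have hε : 0 ≤ ε := by linarith [norm_nonneg (gP x - g)]
  set r := Real.sqrt (ε / HL)
  have hHLr : HL * r ^ 2 = ε := by
    rw [Real.sq_sqrt (by positivity)]
    field_simp
  have hsqrt_r : Real.sqrt (ε * HL) * r = ε := by
    rw [← Real.sqrt_mul (by positivity), show ε * HL * (ε / HL) = ε ^ 2 by field_simp]
    exact Real.sqrt_sq hε
  have hresidual : ‖g + H s‖ = lam * HL / 2 * ‖s‖ := by
    have hkkt : g + H s + (lam * HL / 2) • s = 0 := by simpa [add_assoc] using hkkt1
    rw [eq_neg_of_add_eq_zero_left hkkt, norm_neg, norm_smul,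
      Real.norm_of_nonneg (by positivity)]
  calc ‖gP (x + s)‖
      ≤ HL / 2 * ‖s‖ ^ 2 + ‖gP x - g‖ + ‖hessP x - H‖ * ‖s‖ + ‖g + H s‖ :=
        norm_apply_add_le_of_quadratic_model hhess hlipHess x s g H
    _ ≤ HL / 2 * r ^ 2 + ε / 12 + Real.sqrt (ε * HL) / 6 * r + 2 * r * HL / 2 * r := by
        rw [hresidual]
        gcongr
    _ = (7/4) * ε := by linear_combination (3/2) * hHLr + (1/6) * hsqrt_r

/-- In the MINIMAX-TR setting, if `λ ≤ 2√(ε/H_L)`, then `‖∇P(x+s)‖ ≤ (7/4)ε`. -/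
theorem stmt9 {n : ℕ} (ε HL lam : ℝ) (hε : 0 < ε) (hHL : 0 < HL)
    (P : EuclideanSpace ℝ (Fin n) → ℝ)
    (gP : EuclideanSpace ℝ (Fin n) → EuclideanSpace ℝ (Fin n))
    (hessP : EuclideanSpace ℝ (Fin n) → (EuclideanSpace ℝ (Fin n) →L[ℝ] EuclideanSpace ℝ (Fin n)))
    (hgrad : ∀ x, HasGradientAt P (gP x) x)
    (hhess : ∀ x, HasFDerivAt gP (hessP x) x)
    (hlipHess : ∀ a b, ‖hessP a - hessP b‖ ≤ HL * ‖a - b‖)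
    (x g s : EuclideanSpace ℝ (Fin n))
    (H : EuclideanSpace ℝ (Fin n) →L[ℝ] EuclideanSpace ℝ (Fin n)) (hsa : IsSelfAdjoint H)
    (hgerr : ‖gP x - g‖ ≤ ε / 12)
    (hHerr : ‖hessP x - H‖ ≤ Real.sqrt (ε * HL) / 6)
    (hkkt1 : g + (H + (lam * HL / 2) • ContinuousLinearMap.id ℝ (EuclideanSpace ℝ (Fin n))) s = 0)
    (hsnorm : ‖s‖ ≤ Real.sqrt (ε / HL))
    (hlam0 : 0 ≤ lam) (hlam : lam ≤ 2 * Real.sqrt (ε / HL)) :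
    ‖gP (x + s)‖ ≤ (7/4) * ε :=
  stmt9_general ε HL lam hHL gP hessP hhess hlipHess x g s H hgerr hHerr hkkt1 hsnorm hlam0 hlam
end

section
/- Under the setting of the MINIMAX-TR descent lemma, if λ ≤ 2√(ε/H_L), ‖s‖ ≤ √(ε/H_L), H + (λH_L/2)I ⪰ 0, ‖∇²P(x) − H‖ ≤ √(ε·H_L)/6, and ∇²P is H_L-Lipschitz, then ∇²P(x+s) ⪰ −(13/6)√(H_L·ε)·I. -/
open scoped RealInnerProductSpace

/-- In the MINIMAX-TR setting, if `λ ≤ 2√(ε/H_L)` and `H + (λH_L/2)I ⪰ 0`, then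
`∇²P(x+s) ⪰ −(13/6)√(H_L·ε)·I`. -/
theorem stmt10 {n : ℕ} (ε HL lam : ℝ) (hε : 0 < ε) (hHL : 0 < HL)
    (P : EuclideanSpace ℝ (Fin n) → ℝ)
    (gP : EuclideanSpace ℝ (Fin n) → EuclideanSpace ℝ (Fin n))
    (hessP : EuclideanSpace ℝ (Fin n) → (EuclideanSpace ℝ (Fin n) →L[ℝ] EuclideanSpace ℝ (Fin n)))
    (hgrad : ∀ x, HasGradientAt P (gP x) x)
    (hhess : ∀ x, HasFDerivAt gP (hessP x) x)
    (hlipHess : ∀ a b, ‖hessP a - hessP b‖ ≤ HL * ‖a - b‖)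
    (x s : EuclideanSpace ℝ (Fin n))
    (H : EuclideanSpace ℝ (Fin n) →L[ℝ] EuclideanSpace ℝ (Fin n)) (hsa : IsSelfAdjoint H)
    (hHerr : ‖hessP x - H‖ ≤ Real.sqrt (ε * HL) / 6)
    (hkkt2 : ∀ v, 0 ≤ ⟪v, (H + (lam * HL / 2) • ContinuousLinearMap.id ℝ (EuclideanSpace ℝ (Fin n))) v⟫)
    (hsnorm : ‖s‖ ≤ Real.sqrt (ε / HL))
    (hlam0 : 0 ≤ lam) (hlam : lam ≤ 2 * Real.sqrt (ε / HL)) :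
    ∀ v, -(13/6) * Real.sqrt (HL * ε) * ‖v‖ ^ 2 ≤ ⟪v, hessP (x + s) v⟫ := by
  have hsq : HL * Real.sqrt (ε / HL) = Real.sqrt (HL * ε) := by
    have h2 : (HL * Real.sqrt (ε / HL)) ^ 2 = HL * ε := by
      rw [mul_pow, Real.sq_sqrt (by positivity)]
      field_simp
    rw [← h2, Real.sqrt_sq (by positivity)]
  have hεHL : Real.sqrt (ε * HL) = Real.sqrt (HL * ε) := by rw [mul_comm]
  have hA : ‖hessP (x + s) - hessP x‖ ≤ HL * Real.sqrt (ε / HL) := by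
    have := hlipHess (x + s) x
    simp only [add_sub_cancel_left] at this
    calc ‖hessP (x + s) - hessP x‖ ≤ HL * ‖s‖ := this
      _ ≤ HL * Real.sqrt (ε / HL) := by gcongr
  intro v
  have key : ∀ (T : EuclideanSpace ℝ (Fin n) →L[ℝ] EuclideanSpace ℝ (Fin n)),
      |⟪v, T v⟫| ≤ ‖T‖ * ‖v‖ ^ 2 := by
    intro T
    calc |⟪v, T v⟫| ≤ ‖v‖ * ‖T v‖ := abs_real_inner_le_norm _ _
      _ ≤ ‖v‖ * (‖T‖ * ‖v‖) := by gcongr; exact T.le_opNorm v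
      _ = ‖T‖ * ‖v‖ ^ 2 := by ring
  have hk := hkkt2 v
  simp only [ContinuousLinearMap.add_apply, ContinuousLinearMap.coe_smul',
    ContinuousLinearMap.coe_id', Pi.smul_apply, id_eq, inner_add_right,
    real_inner_smul_right, real_inner_self_eq_norm_sq] at hk
  have e1 : ⟪v, hessP (x + s) v⟫ =
      ⟪v, H v⟫ + ⟪v, (hessP (x + s) - hessP x) v⟫ + ⟪v, (hessP x - H) v⟫ := by
    simp only [ContinuousLinearMap.sub_apply, inner_sub_right]
    ring
  have k2 := key (hessP (x + s) - hessP x)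
  have k3 := key (hessP x - H)
  have habs2 := abs_le.mp k2
  have habs3 := abs_le.mp k3
  have hb2 : ‖hessP (x + s) - hessP x‖ * ‖v‖ ^ 2 ≤ Real.sqrt (HL * ε) * ‖v‖ ^ 2 :=
    mul_le_mul_of_nonneg_right (hsq ▸ hA) (sq_nonneg _)
  have hb3 : ‖hessP x - H‖ * ‖v‖ ^ 2 ≤ Real.sqrt (HL * ε) / 6 * ‖v‖ ^ 2 :=
    mul_le_mul_of_nonneg_right (by rw [← hεHL]; exact hHerr) (sq_nonneg _)
  have hlamb : lam * HL / 2 * ‖v‖ ^ 2 ≤ Real.sqrt (HL * ε) * ‖v‖ ^ 2 := by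
    refine mul_le_mul_of_nonneg_right ?_ (sq_nonneg _)
    rw [← hsq]; nlinarith
  rw [e1]
  nlinarith [habs2.1, habs3.1, hb2, hb3, hlamb, hk, sq_nonneg ‖v‖]
end

section
/- Let s solve min_{‖s‖ ≤ δ} (gᵀs + (1/2)sᵀHs) with g ≠ 0 and δ > 0. Then ‖s‖ ≥ min{δ, ‖g‖/‖H‖} > 0. -/
/-!
Either `s` lies on the boundary, `‖s‖ = δ`, or it is an interior, hence local, minimizer of the
quadratic model; then its gradient `g + ½ (H + H*) s` vanishes, and testing this against `g`
gives `‖g‖² ≤ ‖H‖ ‖s‖ ‖g‖`.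
-/

open scoped RealInnerProductSpace

section QuadraticModel

variable {E : Type*} [NormedAddCommGroup E] [InnerProductSpace ℝ E]

noncomputable def quadraticModel (g : E) (H : E →L[ℝ] E) (v : E) : ℝ :=
  ⟪g, v⟫ + (1 / 2) * ⟪v, H v⟫

theorem IsLocalMin.inner_add_half_inner_eq_zero {g s : E} {H : E →L[ℝ] E}
    (h : IsLocalMin (quadraticModel g H) s) (v : E) :
    ⟪g, v⟫ + (1 / 2) * (⟪s, H v⟫ + ⟪v, H s⟫) = 0 := by
  have hderiv := (innerSL ℝ g).hasFDerivAt.add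
    (((hasFDerivAt_id s).inner ℝ H.hasFDerivAt).const_mul (1 / 2 : ℝ))
  have hzero := congrArg (fun L => L v) (h.hasFDerivAt_eq_zero hderiv)
  simpa [fderivInnerCLM_apply] using hzero

theorem IsLocalMin.norm_le_opNorm_mul_norm {g s : E} {H : E →L[ℝ] E}
    (h : IsLocalMin (quadraticModel g H) s) : ‖g‖ ≤ ‖H‖ * ‖s‖ := by
  have hstat := h.inner_add_half_inner_eq_zero g
  have hcross : ∀ x y : E, |⟪x, H y⟫| ≤ ‖H‖ * ‖x‖ * ‖y‖ := fun x y =>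
    calc |⟪x, H y⟫| ≤ ‖x‖ * ‖H y‖ := abs_real_inner_le_norm _ _
      _ ≤ ‖x‖ * (‖H‖ * ‖y‖) := by gcongr; exact H.le_opNorm y
      _ = ‖H‖ * ‖x‖ * ‖y‖ := by ring
  have hsq : ‖g‖ * ‖g‖ ≤ ‖H‖ * ‖s‖ * ‖g‖ := by
    rw [← real_inner_self_eq_norm_mul_norm]
    have h₁ := hcross s g
    have h₂ := hcross g s
    rw [abs_le] at h₁ h₂
    linarith [mul_comm ‖g‖ ‖s‖]
  rcases (norm_nonneg g).eq_or_lt with hg | hg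
  · rw [← hg]; positivity
  · exact le_of_mul_le_mul_right hsq hg

end QuadraticModel

theorem stmt12_general {n : ℕ} (δ : ℝ) (hδ : 0 < δ)
    (g s : EuclideanSpace ℝ (Fin n)) (hg : g ≠ 0)
    (H : EuclideanSpace ℝ (Fin n) →L[ℝ] EuclideanSpace ℝ (Fin n))
    (hHpos : 0 < ‖H‖)
    (q : EuclideanSpace ℝ (Fin n) → ℝ)
    (hq : ∀ v, q v = ⟪g, v⟫ + (1/2) * ⟪v, H v⟫)
    (hball : s ∈ Metric.closedBall (0 : EuclideanSpace ℝ (Fin n)) δ)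
    (hmin : IsMinOn q (Metric.closedBall (0 : EuclideanSpace ℝ (Fin n)) δ) s) :
    min δ (‖g‖ / ‖H‖) ≤ ‖s‖ ∧ 0 < min δ (‖g‖ / ‖H‖) := by
  refine ⟨?_, lt_min hδ (div_pos (norm_pos_iff.mpr hg) hHpos)⟩
  rcases (mem_closedBall_zero_iff.mp hball).eq_or_lt with hboundary | hinterior
  · exact hboundary ▸ min_le_left _ _
  · have hq : q = quadraticModel g H := funext hq
    have hloc : IsLocalMin (quadraticModel g H) s :=
      (hq ▸ hmin).isLocalMin (Metric.closedBall_mem_nhds_of_mem (mem_ball_zero_iff.mpr hinterior))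
    have hgrad : ‖g‖ ≤ ‖s‖ * ‖H‖ := mul_comm ‖H‖ ‖s‖ ▸ hloc.norm_le_opNorm_mul_norm
    exact (min_le_right _ _).trans ((div_le_iff₀ hHpos).mpr hgrad)

/-- If `s` minimizes `q(s) = gᵀs + (1/2)sᵀHs` over the ball of radius `δ` with
`g ≠ 0`, then `‖s‖ ≥ min{δ, ‖g‖/‖H‖} > 0`. -/
theorem stmt12 {n : ℕ} (δ : ℝ) (hδ : 0 < δ)
    (g s : EuclideanSpace ℝ (Fin n)) (hg : g ≠ 0)
    (H : EuclideanSpace ℝ (Fin n) →L[ℝ] EuclideanSpace ℝ (Fin n))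
    (hsa : IsSelfAdjoint H) (hHpos : 0 < ‖H‖)
    (q : EuclideanSpace ℝ (Fin n) → ℝ)
    (hq : ∀ v, q v = ⟪g, v⟫ + (1/2) * ⟪v, H v⟫)
    (hball : s ∈ Metric.closedBall (0 : EuclideanSpace ℝ (Fin n)) δ)
    (hmin : IsMinOn q (Metric.closedBall (0 : EuclideanSpace ℝ (Fin n)) δ) s) :
    min δ (‖g‖ / ‖H‖) ≤ ‖s‖ ∧ 0 < min δ (‖g‖ / ‖H‖) :=
  stmt12_general δ hδ g s hg H hHpos q hq hball hmin
end

section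
/- Let s solve min_{‖s‖ ≤ δ} q(s) with q(s) = gᵀs + (1/2)sᵀHs. Then q(0) − q(s) ≥ (1/2)‖g‖·min{δ, ‖g‖/‖H‖} (the Cauchy decrease bound). -/
open scoped RealInnerProductSpace

/-- Cauchy decrease: if `s` minimizes `q` over the ball of radius `δ`, then
`q(0) − q(s) ≥ (1/2)‖g‖·min{δ, ‖g‖/‖H‖}`. -/
theorem stmt14 {n : ℕ} (δ : ℝ) (hδ : 0 < δ)
    (g s : EuclideanSpace ℝ (Fin n))
    (H : EuclideanSpace ℝ (Fin n) →L[ℝ] EuclideanSpace ℝ (Fin n))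
    (hsa : IsSelfAdjoint H) (hHpos : 0 < ‖H‖)
    (q : EuclideanSpace ℝ (Fin n) → ℝ)
    (hq : ∀ v, q v = ⟪g, v⟫ + (1/2) * ⟪v, H v⟫)
    (hball : s ∈ Metric.closedBall (0 : EuclideanSpace ℝ (Fin n)) δ)
    (hmin : IsMinOn q (Metric.closedBall (0 : EuclideanSpace ℝ (Fin n)) δ) s) :
    q 0 - q s ≥ (1/2) * ‖g‖ * min δ (‖g‖ / ‖H‖) := by
  have hq0 : q 0 = 0 := by simp [hq]
  rcases eq_or_ne g 0 with hg | hg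
  · have h0 : (0 : EuclideanSpace ℝ (Fin n)) ∈
        Metric.closedBall (0 : EuclideanSpace ℝ (Fin n)) δ := by
      simp [hδ.le]
    have hle := hmin h0
    simp only [Set.mem_setOf_eq] at hle
    have : ‖g‖ = 0 := by simp [hg]
    rw [this]
    simp only [hq0] at *
    nlinarith [hle]
  · have hgn : 0 < ‖g‖ := norm_pos_iff.mpr hg
    set t : ℝ := min (δ / ‖g‖) (1 / ‖H‖) with htdef
    have ht0 : 0 < t := lt_min (div_pos hδ hgn) (div_pos one_pos hHpos)
    have htg : t * ‖g‖ ≤ δ := by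
      calc t * ‖g‖ ≤ (δ / ‖g‖) * ‖g‖ :=
            mul_le_mul_of_nonneg_right (min_le_left _ _) hgn.le
        _ = δ := div_mul_cancel₀ _ hgn.ne'
    have hp : ((-t) • g) ∈ Metric.closedBall (0 : EuclideanSpace ℝ (Fin n)) δ := by
      simp only [Metric.mem_closedBall, dist_zero_right, norm_smul, Real.norm_eq_abs,
        abs_neg, abs_of_pos ht0]
      exact htg
    have hle := hmin hp
    simp only [Set.mem_setOf_eq] at hle
    have hqp : q ((-t) • g) = -(t * ‖g‖ ^ 2) + t ^ 2 / 2 * ⟪g, H g⟫ := by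
      rw [hq, map_smul]
      simp only [real_inner_smul_left, real_inner_smul_right,
        real_inner_self_eq_norm_sq, smul_eq_mul]
      ring
    have hHg : ⟪g, H g⟫ ≤ ‖H‖ * ‖g‖ ^ 2 := by
      calc ⟪g, H g⟫ ≤ ‖g‖ * ‖H g‖ := real_inner_le_norm _ _
        _ ≤ ‖g‖ * (‖H‖ * ‖g‖) :=
            mul_le_mul_of_nonneg_left (H.le_opNorm g) (norm_nonneg g)
        _ = ‖H‖ * ‖g‖ ^ 2 := by ring
    have htH : t * ‖H‖ ≤ 1 := by
      calc t * ‖H‖ ≤ (1 / ‖H‖) * ‖H‖ :=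
            mul_le_mul_of_nonneg_right (min_le_right _ _) hHpos.le
        _ = 1 := one_div_mul_cancel hHpos.ne'
    have htmin : t * ‖g‖ = min δ (‖g‖ / ‖H‖) := by
      rw [htdef, min_mul_of_nonneg _ _ hgn.le, div_mul_cancel₀ _ hgn.ne',
        one_div, inv_mul_eq_div]
    rw [← htmin]
    have h1 : t ^ 2 / 2 * ⟪g, H g⟫ ≤ t ^ 2 / 2 * (‖H‖ * ‖g‖ ^ 2) :=
      mul_le_mul_of_nonneg_left hHg (by positivity)
    have h2 : (t * ‖H‖) * (t * ‖g‖ ^ 2) ≤ 1 * (t * ‖g‖ ^ 2) :=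
      mul_le_mul_of_nonneg_right htH (by positivity)
    nlinarith [hle, hqp, hq0]
end

section
/- Suppose P is continuously differentiable with L-Lipschitz gradient, ‖∇P(x) − g‖ ≤ C₁‖s‖², ‖H‖ ≤ H_max, and s, λ satisfy g + (H+λI)s = 0 with H + λI ⪰ 0 and q(0) − q(s) = (1/2)sᵀ(H+λI)s + (λ/2)‖s‖². If λ ≥ 2L + H_max + 2(η + C₁)‖s‖ with η > 0, then P(x) − P(x+s) ≥ η‖s‖³. -/
open scoped RealInnerProductSpace

/-!
The gradient error and the KKT equation give `⟪∇P(x), s⟫ ≤ C₁‖s‖³ + (H_max - λ)‖s‖²`, and the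
mean value inequality for the `L`-Lipschitz gradient gives
`P(x + s) ≤ P(x) + ⟪∇P(x), s⟫ + L‖s‖²`. The lower bound on `λ` leaves a margin of
`L‖s‖² + (2η + C₁)‖s‖³ ≥ η‖s‖³`.
-/

section

variable {E : Type*} [NormedAddCommGroup E] [InnerProductSpace ℝ E]

theorem sub_sub_inner_le_of_lipschitz_gradient [CompleteSpace E] {f : E → ℝ} {f' : E → E}
    {L : ℝ} (hL : 0 ≤ L) (hf : ∀ x, HasGradientAt f (f' x) x)
    (hlip : ∀ a b, ‖f' a - f' b‖ ≤ L * ‖a - b‖) (x s : E) :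
    f (x + s) - f x - ⟪f' x, s⟫ ≤ L * ‖s‖ ^ 2 := by
  let φ : E →L[ℝ] ℝ := InnerProductSpace.toDual ℝ E (f' x)
  have hbound : ∀ z ∈ Metric.closedBall x ‖s‖,
      ‖(InnerProductSpace.toDual ℝ E (f' z) : E →L[ℝ] ℝ) - φ‖ ≤ L * ‖s‖ := by
    intro z hz
    rw [← map_sub, LinearIsometryEquiv.norm_map]
    exact (hlip z x).trans (mul_le_mul_of_nonneg_left (mem_closedBall_iff_norm.mp hz) hL)
  have hmvt := (convex_closedBall x ‖s‖).norm_image_sub_le_of_norm_hasFDerivWithin_le'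
    (fun z _ => (hf z).hasFDerivAt.hasFDerivWithinAt) hbound
    (Metric.mem_closedBall_self (norm_nonneg s)) (y := x + s) (by simp)
  simp only [add_sub_cancel_left, φ, InnerProductSpace.toDual_apply_apply] at hmvt
  calc f (x + s) - f x - ⟪f' x, s⟫ ≤ ‖f (x + s) - f x - ⟪f' x, s⟫‖ := Real.le_norm_self _
    _ ≤ L * ‖s‖ * ‖s‖ := hmvt
    _ = L * ‖s‖ ^ 2 := by ring

theorem inner_le_of_add_shifted_apply_eq_zero {g s : E} {H : E →L[ℝ] E} {Hmax lam : ℝ}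
    (hH : ‖H‖ ≤ Hmax) (hkkt : g + (H + lam • ContinuousLinearMap.id ℝ E) s = 0) :
    ⟪g, s⟫ ≤ (Hmax - lam) * ‖s‖ ^ 2 := by
  have hg : g = -(H s + lam • s) := eq_neg_of_add_eq_zero_left (by simpa using hkkt)
  have hHs : -⟪H s, s⟫ ≤ Hmax * ‖s‖ ^ 2 :=
    calc -⟪H s, s⟫ ≤ ‖H s‖ * ‖s‖ := (neg_le_abs _).trans (abs_real_inner_le_norm _ _)
      _ ≤ ‖H‖ * ‖s‖ * ‖s‖ := by gcongr; exact H.le_opNorm s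
      _ ≤ Hmax * ‖s‖ * ‖s‖ := by gcongr
      _ = Hmax * ‖s‖ ^ 2 := by ring
  rw [hg, inner_neg_left, inner_add_left, real_inner_smul_left, real_inner_self_eq_norm_sq]
  linarith

end

theorem stmt15_general {n : ℕ} (L Hmax C1 η lam : ℝ)
    (hL : 0 ≤ L) (hC1 : 0 ≤ C1) (hη0 : 0 < η)
    (P : EuclideanSpace ℝ (Fin n) → ℝ)
    (gP : EuclideanSpace ℝ (Fin n) → EuclideanSpace ℝ (Fin n))
    (hgrad : ∀ x, HasGradientAt P (gP x) x)
    (hlip : ∀ a b, ‖gP a - gP b‖ ≤ L * ‖a - b‖)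
    (x g s : EuclideanSpace ℝ (Fin n))
    (H : EuclideanSpace ℝ (Fin n) →L[ℝ] EuclideanSpace ℝ (Fin n))
    (hHnorm : ‖H‖ ≤ Hmax)
    (hgerr : ‖gP x - g‖ ≤ C1 * ‖s‖ ^ 2)
    (hkkt1 : g + (H + lam • ContinuousLinearMap.id ℝ (EuclideanSpace ℝ (Fin n))) s = 0)
    (hlam : lam ≥ 2 * L + Hmax + 2 * (η + C1) * ‖s‖) :
    P x - P (x + s) ≥ η * ‖s‖ ^ 3 := by
  have hdescent := sub_sub_inner_le_of_lipschitz_gradient hL hgrad hlip x s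
  have hmodel := inner_le_of_add_shifted_apply_eq_zero hHnorm hkkt1
  have herr : ⟪gP x - g, s⟫ ≤ C1 * ‖s‖ ^ 3 :=
    calc ⟪gP x - g, s⟫ ≤ ‖gP x - g‖ * ‖s‖ := real_inner_le_norm _ _
      _ ≤ C1 * ‖s‖ ^ 2 * ‖s‖ := by gcongr
      _ = C1 * ‖s‖ ^ 3 := by ring
  rw [inner_sub_left] at herr
  have hmargin : (2 * L + Hmax + 2 * (η + C1) * ‖s‖) * ‖s‖ ^ 2 ≤ lam * ‖s‖ ^ 2 :=
    mul_le_mul_of_nonneg_right hlam (sq_nonneg _)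
  have hs := norm_nonneg s
  nlinarith [mul_nonneg hL (sq_nonneg ‖s‖), mul_nonneg (add_nonneg hη0.le hC1) (pow_nonneg hs 3)]

/-- If `∇P` is `L`-Lipschitz, `‖∇P(x) − g‖ ≤ C₁‖s‖²`, `‖H‖ ≤ H_max`, `(s, λ)`
satisfy the trust-region KKT conditions, and `λ ≥ 2L + H_max + 2(η + C₁)‖s‖`, then
`P(x) − P(x+s) ≥ η‖s‖³`. -/
theorem stmt15 {n : ℕ} (L Hmax C1 η lam : ℝ)
    (hL : 0 ≤ L) (hC1 : 0 ≤ C1) (hη0 : 0 < η) (hη1 : η < 1) (hlam0 : 0 ≤ lam)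
    (P : EuclideanSpace ℝ (Fin n) → ℝ)
    (gP : EuclideanSpace ℝ (Fin n) → EuclideanSpace ℝ (Fin n))
    (hgrad : ∀ x, HasGradientAt P (gP x) x)
    (hlip : ∀ a b, ‖gP a - gP b‖ ≤ L * ‖a - b‖)
    (x g s : EuclideanSpace ℝ (Fin n))
    (H : EuclideanSpace ℝ (Fin n) →L[ℝ] EuclideanSpace ℝ (Fin n))
    (hsa : IsSelfAdjoint H) (hHnorm : ‖H‖ ≤ Hmax)
    (hgerr : ‖gP x - g‖ ≤ C1 * ‖s‖ ^ 2)
    (hkkt1 : g + (H + lam • ContinuousLinearMap.id ℝ (EuclideanSpace ℝ (Fin n))) s = 0)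
    (hkkt2 : ∀ v, 0 ≤ ⟪v, (H + lam • ContinuousLinearMap.id ℝ (EuclideanSpace ℝ (Fin n))) v⟫)
    (hlam : lam ≥ 2 * L + Hmax + 2 * (η + C1) * ‖s‖) :
    P x - P (x + s) ≥ η * ‖s‖ ^ 3 :=
  stmt15_general L Hmax C1 η lam hL hC1 hη0 P gP hgrad hlip x g s H hHnorm hgerr hkkt1 hlam
end

section
/- Suppose P is twice differentiable with H_L-Lipschitz Hessian, ‖∇P(x) − g‖ ≤ C₁‖s‖², ‖∇²P(x) − H‖ ≤ C₂‖s‖, and s, λ satisfy the trust-region KKT conditions (g + (H+λI)s = 0, H + λI ⪰ 0). If λ ≥ 2(C₁ + C₂/2 + H_L/2 + η)‖s‖ with η > 0, then P(x) − P(x+s) ≥ η‖s‖³. -/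
/-!
Along the segment `t ↦ x + t • s`, the Lipschitz bound on the Hessian makes the derivative of
`P (x + t • s)` exceed that of its second-order model by at most `H_L t² ‖s‖³`; comparing the
two on `[0, 1]` gives `P (x + s) ≤ P x + ⟪∇P x, s⟫ + ⟪∇²P x s, s⟫ / 2 + H_L ‖s‖³ / 3`.
Swapping `∇P x`, `∇²P x` for `g`, `H` costs `(C₁ + C₂ / 2) ‖s‖³`, while the KKT conditions force
the model decrease `⟪g, s⟫ + ⟪H s, s⟫ / 2 ≤ -λ ‖s‖² / 2`, which the lower bound on `λ` makes
dominant.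
-/

open scoped RealInnerProductSpace
open Set

section

variable {E F : Type*} [NormedAddCommGroup E] [NormedSpace ℝ E]
  [NormedAddCommGroup F] [NormedSpace ℝ F]

theorem norm_image_add_sub_sub_fderiv_le_of_lipschitz {f : E → F} {f' : E → E →L[ℝ] F} {L : ℝ}
    (hL : 0 ≤ L) (hf : ∀ x, HasFDerivAt f (f' x) x) (hf' : ∀ a b, ‖f' a - f' b‖ ≤ L * ‖a - b‖)
    (x u : E) : ‖f (x + u) - f x - f' x u‖ ≤ L * ‖u‖ ^ 2 := by
  -- mean value theorem for `y ↦ f y - f' x y`, whose derivative `f' y - f' x` is bounded by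
  -- `L ‖u‖` on the segment `[x, x + u]`
  have hmvt := (convex_segment x (x + u)).norm_image_sub_le_of_norm_hasFDerivWithin_le
    (f := fun y => f y - f' x y) (C := L * ‖u‖)
    (fun y _ => ((hf y).sub (f' x).hasFDerivAt).hasFDerivWithinAt)
    (fun y hy => by
      rw [segment_eq_image'] at hy
      obtain ⟨θ, hθ, rfl⟩ := hy
      calc ‖f' (x + θ • (x + u - x)) - f' x‖ ≤ L * ‖x + θ • (x + u - x) - x‖ := hf' _ _
        _ = L * (θ * ‖u‖) := by
          rw [add_sub_cancel_left, add_sub_cancel_left, norm_smul, Real.norm_of_nonneg hθ.1]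
        _ ≤ L * ‖u‖ := by gcongr; exact mul_le_of_le_one_left (norm_nonneg u) hθ.2)
    (left_mem_segment ℝ _ _) (right_mem_segment ℝ _ _)
  calc ‖f (x + u) - f x - f' x u‖ = ‖f (x + u) - f' x (x + u) - (f x - f' x x)‖ := by
        rw [map_add]; congr 1; abel
    _ ≤ L * ‖u‖ * ‖x + u - x‖ := hmvt
    _ = L * ‖u‖ ^ 2 := by rw [add_sub_cancel_left]; ring

end

section

variable {E : Type*} [NormedAddCommGroup E] [InnerProductSpace ℝ E]

theorem image_add_le_taylor_of_lipschitz_hessian [CompleteSpace E] {P : E → ℝ} {gP : E → E}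
    {hessP : E → E →L[ℝ] E} {L : ℝ} (hL : 0 ≤ L) (hgrad : ∀ x, HasGradientAt P (gP x) x)
    (hhess : ∀ x, HasFDerivAt gP (hessP x) x) (hlip : ∀ a b, ‖hessP a - hessP b‖ ≤ L * ‖a - b‖)
    (x s : E) :
    P (x + s) ≤ P x + ⟪gP x, s⟫ + ⟪hessP x s, s⟫ / 2 + L / 3 * ‖s‖ ^ 3 := by
  set a := ⟪gP x, s⟫
  set b := ⟪hessP x s, s⟫
  set c := L * ‖s‖ ^ 3
  have hP : ∀ t : ℝ, HasDerivAt (fun t : ℝ => P (x + t • s)) ⟪gP (x + t • s), s⟫ t := fun t => by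
    have := (hgrad (x + t • s)).hasFDerivAt.comp_hasDerivAt t
      (((hasDerivAt_id t).smul_const s).const_add x)
    simp only [Function.comp_def, id, one_smul, InnerProductSpace.toDual_apply_apply] at this
    exact this
  have hB : ∀ t : ℝ, HasDerivAt (fun t : ℝ => P x + a * t + b * (t ^ 2 / 2) + c * (t ^ 3 / 3))
      (a + b * t + c * t ^ 2) t := fun t => by
    have : HasDerivAt (fun t : ℝ => P x + a * t + b * (t ^ 2 / 2) + c * (t ^ 3 / 3)) _ t :=
      ((((hasDerivAt_id t).const_mul a).const_add (P x)).add
        (((hasDerivAt_pow 2 t).div_const 2).const_mul b)).add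
        (((hasDerivAt_pow 3 t).div_const 3).const_mul c)
    convert this using 1
    push_cast; ring
  have hbound : ∀ t ∈ Ico (0 : ℝ) 1, ⟪gP (x + t • s), s⟫ ≤ a + b * t + c * t ^ 2 := by
    intro t _
    have hrem : ⟪gP (x + t • s) - gP x - hessP x (t • s), s⟫ ≤ L * ‖t • s‖ ^ 2 * ‖s‖ :=
      (real_inner_le_norm _ _).trans <| mul_le_mul_of_nonneg_right
        (norm_image_add_sub_sub_fderiv_le_of_lipschitz hL hhess hlip x (t • s)) (norm_nonneg s)
    rw [map_smul, inner_sub_left, inner_sub_left, real_inner_smul_left, norm_smul,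
      Real.norm_eq_abs, mul_pow, sq_abs] at hrem
    linarith
  have := image_le_of_deriv_right_le_deriv_boundary
    (fun t _ => (hP t).continuousAt.continuousWithinAt) (fun t _ => (hP t).hasDerivWithinAt)
    (by simp) (fun t _ => (hB t).continuousAt.continuousWithinAt)
    (fun t _ => (hB t).hasDerivWithinAt) hbound (right_mem_Icc.2 zero_le_one)
  simp only [one_smul] at this
  linarith

theorem inner_add_half_inner_le_of_kkt {H : E →L[ℝ] E} {g s : E} {lam : ℝ}
    (hstat : g + (H + lam • ContinuousLinearMap.id ℝ E) s = 0)
    (hpsd : 0 ≤ ⟪s, (H + lam • ContinuousLinearMap.id ℝ E) s⟫) :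
    ⟪g, s⟫ + ⟪H s, s⟫ / 2 ≤ -(lam / 2 * ‖s‖ ^ 2) := by
  rw [eq_neg_of_add_eq_zero_left hstat]
  simp only [add_apply, smul_apply,
    ContinuousLinearMap.id_apply, inner_neg_left, inner_add_left, inner_add_right,
    real_inner_smul_left, real_inner_smul_right, real_inner_self_eq_norm_sq] at hpsd ⊢
  rw [real_inner_comm] at hpsd
  linarith

theorem inner_le_inner_add_norm_sub_mul (u v s : E) : ⟪u, s⟫ ≤ ⟪v, s⟫ + ‖u - v‖ * ‖s‖ := by
  have := real_inner_le_norm (u - v) s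
  rw [inner_sub_left] at this
  linarith

end

theorem stmt16_general {n : ℕ} (HL C1 C2 η lam : ℝ)
    (hHL : 0 < HL)
    (P : EuclideanSpace ℝ (Fin n) → ℝ)
    (gP : EuclideanSpace ℝ (Fin n) → EuclideanSpace ℝ (Fin n))
    (hessP : EuclideanSpace ℝ (Fin n) → (EuclideanSpace ℝ (Fin n) →L[ℝ] EuclideanSpace ℝ (Fin n)))
    (hgrad : ∀ x, HasGradientAt P (gP x) x)
    (hhess : ∀ x, HasFDerivAt gP (hessP x) x)
    (hlipHess : ∀ a b, ‖hessP a - hessP b‖ ≤ HL * ‖a - b‖)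
    (x g s : EuclideanSpace ℝ (Fin n))
    (H : EuclideanSpace ℝ (Fin n) →L[ℝ] EuclideanSpace ℝ (Fin n))
    (hgerr : ‖gP x - g‖ ≤ C1 * ‖s‖ ^ 2)
    (hHerr : ‖hessP x - H‖ ≤ C2 * ‖s‖)
    (hkkt1 : g + (H + lam • ContinuousLinearMap.id ℝ (EuclideanSpace ℝ (Fin n))) s = 0)
    (hkkt2 : ∀ v, 0 ≤ ⟪v, (H + lam • ContinuousLinearMap.id ℝ (EuclideanSpace ℝ (Fin n))) v⟫)
    (hlam : lam ≥ 2 * (C1 + C2 / 2 + HL / 2 + η) * ‖s‖) :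
    P x - P (x + s) ≥ η * ‖s‖ ^ 3 := by
  have htaylor := image_add_le_taylor_of_lipschitz_hessian hHL.le hgrad hhess hlipHess x s
  have hmodel := inner_add_half_inner_le_of_kkt hkkt1 (hkkt2 s)
  have hgrad_err : ⟪gP x, s⟫ ≤ ⟪g, s⟫ + C1 * ‖s‖ ^ 2 * ‖s‖ :=
    (inner_le_inner_add_norm_sub_mul _ _ s).trans (by gcongr)
  have hhess_err : ⟪hessP x s, s⟫ ≤ ⟪H s, s⟫ + C2 * ‖s‖ * ‖s‖ * ‖s‖ := by
    have hop : ‖(hessP x - H) s‖ ≤ C2 * ‖s‖ * ‖s‖ :=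
      ((hessP x - H).le_opNorm s).trans (by gcongr)
    exact (inner_le_inner_add_norm_sub_mul _ _ s).trans (by gcongr; exact hop)
  have hlam' := mul_le_mul_of_nonneg_right hlam (sq_nonneg ‖s‖)
  have hcube : 0 ≤ HL * ‖s‖ ^ 3 := by positivity
  linarith

/-- If `P` has `H_L`-Lipschitz Hessian, `‖∇P(x) − g‖ ≤ C₁‖s‖²`,
`‖∇²P(x) − H‖ ≤ C₂‖s‖`, `(s, λ)` satisfy the trust-region KKT conditions, and
`λ ≥ 2(C₁ + C₂/2 + H_L/2 + η)‖s‖`, then `P(x) − P(x+s) ≥ η‖s‖³`. -/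
theorem stmt16 {n : ℕ} (HL C1 C2 η lam : ℝ)
    (hHL : 0 < HL) (hC1 : 0 ≤ C1) (hC2 : 0 ≤ C2) (hη0 : 0 < η) (hη1 : η < 1) (hlam0 : 0 ≤ lam)
    (P : EuclideanSpace ℝ (Fin n) → ℝ)
    (gP : EuclideanSpace ℝ (Fin n) → EuclideanSpace ℝ (Fin n))
    (hessP : EuclideanSpace ℝ (Fin n) → (EuclideanSpace ℝ (Fin n) →L[ℝ] EuclideanSpace ℝ (Fin n)))
    (hgrad : ∀ x, HasGradientAt P (gP x) x)
    (hhess : ∀ x, HasFDerivAt gP (hessP x) x)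
    (hlipHess : ∀ a b, ‖hessP a - hessP b‖ ≤ HL * ‖a - b‖)
    (x g s : EuclideanSpace ℝ (Fin n))
    (H : EuclideanSpace ℝ (Fin n) →L[ℝ] EuclideanSpace ℝ (Fin n)) (hsa : IsSelfAdjoint H)
    (hgerr : ‖gP x - g‖ ≤ C1 * ‖s‖ ^ 2)
    (hHerr : ‖hessP x - H‖ ≤ C2 * ‖s‖)
    (hkkt1 : g + (H + lam • ContinuousLinearMap.id ℝ (EuclideanSpace ℝ (Fin n))) s = 0)
    (hkkt2 : ∀ v, 0 ≤ ⟪v, (H + lam • ContinuousLinearMap.id ℝ (EuclideanSpace ℝ (Fin n))) v⟫)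
    (hlam : lam ≥ 2 * (C1 + C2 / 2 + HL / 2 + η) * ‖s‖) :
    P x - P (x + s) ≥ η * ‖s‖ ^ 3 :=
  stmt16_general HL C1 C2 η lam hHL P gP hessP hgrad hhess hlipHess x g s H hgerr hHerr hkkt1 hkkt2
    hlam
end

section
/- Suppose P is twice differentiable with H_L-Lipschitz Hessian, ‖∇P(x) − g‖ ≤ C₁‖s‖², ‖∇²P(x) − H‖ ≤ C₂‖s‖, and g + (H + λI)s = 0 with 0 ≤ λ ≤ σ‖s‖. Then ‖∇P(x+s)‖ ≤ (H_L + C₁ + C₂ + σ)‖s‖², hence ‖s‖ ≥ (H_L + C₁ + C₂ + σ)^{−1/2}‖∇P(x+s)‖^{1/2}. -/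
open scoped RealInnerProductSpace

/-- If `P` has `H_L`-Lipschitz Hessian, `‖∇P(x) − g‖ ≤ C₁‖s‖²`,
`‖∇²P(x) − H‖ ≤ C₂‖s‖`, and `g + (H+λI)s = 0` with `0 ≤ λ ≤ σ‖s‖`, then
`‖∇P(x+s)‖ ≤ (H_L + C₁ + C₂ + σ)‖s‖²`, hence `‖s‖ ≥ (H_L+C₁+C₂+σ)^{−1/2}‖∇P(x+s)‖^{1/2}`. -/
theorem stmt17 {n : ℕ} (HL C1 C2 σ lam : ℝ)
    (hHL : 0 < HL) (hC1 : 0 ≤ C1) (hC2 : 0 ≤ C2) (hσ : 0 < σ)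
    (hlam0 : 0 ≤ lam)
    (P : EuclideanSpace ℝ (Fin n) → ℝ)
    (gP : EuclideanSpace ℝ (Fin n) → EuclideanSpace ℝ (Fin n))
    (hessP : EuclideanSpace ℝ (Fin n) → (EuclideanSpace ℝ (Fin n) →L[ℝ] EuclideanSpace ℝ (Fin n)))
    (hgrad : ∀ x, HasGradientAt P (gP x) x)
    (hhess : ∀ x, HasFDerivAt gP (hessP x) x)
    (hlipHess : ∀ a b, ‖hessP a - hessP b‖ ≤ HL * ‖a - b‖)
    (x g s : EuclideanSpace ℝ (Fin n))
    (H : EuclideanSpace ℝ (Fin n) →L[ℝ] EuclideanSpace ℝ (Fin n)) (hsa : IsSelfAdjoint H)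
    (hgerr : ‖gP x - g‖ ≤ C1 * ‖s‖ ^ 2)
    (hHerr : ‖hessP x - H‖ ≤ C2 * ‖s‖)
    (hkkt1 : g + (H + lam • ContinuousLinearMap.id ℝ (EuclideanSpace ℝ (Fin n))) s = 0)
    (hlam : lam ≤ σ * ‖s‖) :
    ‖gP (x + s)‖ ≤ (HL + C1 + C2 + σ) * ‖s‖ ^ 2 ∧
    (Real.sqrt (HL + C1 + C2 + σ))⁻¹ * Real.sqrt ‖gP (x + s)‖ ≤ ‖s‖ := by
  have hs0 : (0:ℝ) ≤ ‖s‖ := norm_nonneg s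
  -- Taylor-type bound on the segment [x, x+s]
  have htaylor : ‖gP (x + s) - gP x - (hessP x) ((x + s) - x)‖ ≤ (HL * ‖s‖) * ‖(x+s) - x‖ := by
    apply Convex.norm_image_sub_le_of_norm_hasFDerivWithin_le'
      (fun z hz => (hhess z).hasFDerivWithinAt)
      (fun z hz => ?_) (convex_segment x (x+s))
      (left_mem_segment ℝ x (x+s)) (right_mem_segment ℝ x (x+s))
    rcases hz with ⟨a, b, ha, hb, hab, rfl⟩
    calc ‖hessP (a • x + b • (x + s)) - hessP x‖
        ≤ HL * ‖(a • x + b • (x + s)) - x‖ := hlipHess _ _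
      _ ≤ HL * ‖s‖ := by
          apply mul_le_mul_of_nonneg_left _ hHL.le
          have : (a • x + b • (x + s)) - x = b • s := by
            rw [smul_add]
            have : a • x + b • x = x := by rw [← add_smul, hab, one_smul]
            rw [show a • x + (b • x + b • s) - x = (a • x + b • x) - x + b • s by abel, this]
            abel
          rw [this, norm_smul]
          exact mul_le_of_le_one_left hs0 (by rw [Real.norm_eq_abs, abs_of_nonneg hb]; linarith)
  have hxs : (x + s) - x = s := by abel
  rw [hxs] at htaylor
  have hdecomp : gP (x + s) =
      (gP (x + s) - gP x - (hessP x) s) + (gP x - g) + ((hessP x - H) s)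
        + (g + (H + lam • ContinuousLinearMap.id ℝ (EuclideanSpace ℝ (Fin n))) s) - lam • s := by
    simp only [ContinuousLinearMap.add_apply, ContinuousLinearMap.sub_apply,
      ContinuousLinearMap.smul_apply, ContinuousLinearMap.id_apply]
    abel
  have hbound : ‖gP (x + s)‖ ≤ (HL + C1 + C2 + σ) * ‖s‖ ^ 2 := by
    rw [hdecomp, hkkt1]
    calc ‖(gP (x + s) - gP x - (hessP x) s) + (gP x - g) + ((hessP x - H) s) + 0 - lam • s‖
        ≤ ‖(gP (x + s) - gP x - (hessP x) s) + (gP x - g) + ((hessP x - H) s) + 0‖ + ‖lam • s‖ :=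
          norm_sub_le _ _
      _ ≤ ‖(gP (x + s) - gP x - (hessP x) s) + (gP x - g)‖ + ‖(hessP x - H) s‖ + ‖lam • s‖ := by
          rw [add_zero]; gcongr; exact norm_add_le _ _
      _ ≤ ‖gP (x + s) - gP x - (hessP x) s‖ + ‖gP x - g‖ + ‖(hessP x - H) s‖ + ‖lam • s‖ := by
          gcongr; exact norm_add_le _ _
      _ ≤ (HL * ‖s‖) * ‖s‖ + C1 * ‖s‖ ^ 2 + (C2 * ‖s‖) * ‖s‖ + (σ * ‖s‖) * ‖s‖ := by
          gcongr
          · exact (le_trans ((hessP x - H).le_opNorm s) (by gcongr))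
          · rw [norm_smul, Real.norm_eq_abs, abs_of_nonneg hlam0]; gcongr
      _ = (HL + C1 + C2 + σ) * ‖s‖ ^ 2 := by ring
  refine ⟨hbound, ?_⟩
  have hKpos : (0:ℝ) < HL + C1 + C2 + σ := by linarith
  rw [inv_mul_le_iff₀ (Real.sqrt_pos.mpr hKpos)]
  calc Real.sqrt ‖gP (x + s)‖ ≤ Real.sqrt ((HL + C1 + C2 + σ) * ‖s‖ ^ 2) :=
        Real.sqrt_le_sqrt hbound
    _ = Real.sqrt (HL + C1 + C2 + σ) * ‖s‖ := by
        rw [Real.sqrt_mul hKpos.le, Real.sqrt_sq hs0]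
end

section
/- Suppose P is twice differentiable with H_L-Lipschitz Hessian, ‖∇P(x) − g‖ ≤ C₁‖s‖², ‖∇²P(x) − H‖ ≤ C₂‖s‖, H ⪰ (μ/2)I for μ > 0, and s = −H⁻¹g (a Newton step). If additionally (8/μ²)C₁²‖s‖² ≤ 1/2, then ‖∇P(x+s)‖ ≤ (16/μ²)(H_L/2 + C₁ + C₂)‖∇P(x)‖² (quadratic convergence of the inexact Newton step). -/
open scoped RealInnerProductSpace

/-!
The Newton residual `∇P(x+s)` splits as the Taylor remainder `∇P(x+s) - ∇P(x) - ∇²P(x) s`,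
of size `(H_L/2)‖s‖²` by the Lipschitz Hessian, plus the gradient error `∇P(x) - g` and the
Hessian error `(∇²P(x) - H) s`; hence `‖∇P(x+s)‖ ≤ (H_L/2 + C₁ + C₂)‖s‖²`. Coercivity of `H`
gives `(μ/2)‖s‖ ≤ ‖g‖ ≤ ‖∇P(x)‖ + C₁‖s‖²`, and the smallness assumption `4C₁‖s‖ ≤ μ` turns
this into `‖s‖ ≤ (4/μ)‖∇P(x)‖`.
-/

section

variable {E F : Type*} [NormedAddCommGroup E] [NormedSpace ℝ E]
  [NormedAddCommGroup F] [NormedSpace ℝ F]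

theorem norm_sub_sub_fderiv_le_of_lipschitz {f : E → F} {f' : E → E →L[ℝ] F} {L : ℝ}
    (hf : ∀ x, HasFDerivAt f (f' x) x) (hL : ∀ a b, ‖f' a - f' b‖ ≤ L * ‖a - b‖) (x s : E) :
    ‖f (x + s) - f x - f' x s‖ ≤ L / 2 * ‖s‖ ^ 2 := by
  set φ : ℝ → F := fun t => f (x + t • s) - f x - t • f' x s
  have hφ (t : ℝ) : HasDerivAt φ (f' (x + t • s) s - f' x s) t := by
    have hline : HasDerivAt (fun t : ℝ => x + t • s) s t := by
      simpa using ((hasDerivAt_id t).smul_const s).const_add x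
    refine ((((hf _).comp_hasDerivAt t hline).sub_const (f x)).sub
      ((hasDerivAt_id t).smul_const (f' x s))).congr_deriv ?_
    rw [one_smul]
  have hB (t : ℝ) : HasDerivAt (fun t => L / 2 * ‖s‖ ^ 2 * t ^ 2) (L * ‖s‖ ^ 2 * t) t := by
    refine ((hasDerivAt_pow 2 t).const_mul (L / 2 * ‖s‖ ^ 2)).congr_deriv ?_
    push_cast
    ring
  have bound : ∀ t ∈ Set.Ico (0 : ℝ) 1, ‖f' (x + t • s) s - f' x s‖ ≤ L * ‖s‖ ^ 2 * t := by
    intro t ht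
    calc ‖f' (x + t • s) s - f' x s‖ ≤ ‖f' (x + t • s) - f' x‖ * ‖s‖ := by
          rw [← sub_apply]
          exact ContinuousLinearMap.le_opNorm _ _
      _ ≤ L * (t * ‖s‖) * ‖s‖ := by
          gcongr
          simpa [norm_smul, abs_of_nonneg ht.1] using hL (x + t • s) x
      _ = L * ‖s‖ ^ 2 * t := by ring
  have h := image_norm_le_of_norm_deriv_right_le_deriv_boundary
    (fun t _ => (hφ t).continuousAt.continuousWithinAt) (fun t _ => (hφ t).hasDerivWithinAt)
    (by simp [φ]) hB bound (Set.right_mem_Icc.2 zero_le_one)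
  simpa [φ] using h

theorem norm_le_of_newton_step (a b g : F) (A H : E →L[ℝ] F) (s : E)
    (hs : H s = -g) : ‖b‖ ≤ ‖b - a - A s‖ + ‖a - g‖ + ‖A - H‖ * ‖s‖ := by
  have hb : b = (b - a - A s) + (a - g) + (A - H) s := by
    rw [sub_apply, hs]
    abel
  calc ‖b‖ = ‖(b - a - A s) + (a - g) + (A - H) s‖ := congrArg _ hb
    _ ≤ ‖b - a - A s‖ + ‖a - g‖ + ‖(A - H) s‖ := norm_add₃_le
    _ ≤ _ := by gcongr; exact (A - H).le_opNorm s

end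

theorem mul_norm_le_norm_apply_of_coercive {E : Type*} [NormedAddCommGroup E]
    [InnerProductSpace ℝ E] {H : E →L[ℝ] E} {c : ℝ} (hH : ∀ v, c * ‖v‖ ^ 2 ≤ ⟪v, H v⟫) (v : E) :
    c * ‖v‖ ≤ ‖H v‖ := by
  rcases (norm_nonneg v).eq_or_lt with hv | hv
  · rw [← hv, mul_zero]
    exact norm_nonneg _
  · refine le_of_mul_le_mul_right ?_ hv
    calc c * ‖v‖ * ‖v‖ = c * ‖v‖ ^ 2 := by ring
      _ ≤ ⟪v, H v⟫ := hH v
      _ ≤ ‖v‖ * ‖H v‖ := real_inner_le_norm v (H v)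
      _ = ‖H v‖ * ‖v‖ := mul_comm _ _

theorem stmt19_general {n : ℕ} (HL C1 C2 μ : ℝ)
    (hHL : 0 < HL) (hC1 : 0 ≤ C1) (hC2 : 0 ≤ C2) (hμ : 0 < μ)
    (gP : EuclideanSpace ℝ (Fin n) → EuclideanSpace ℝ (Fin n))
    (hessP : EuclideanSpace ℝ (Fin n) → (EuclideanSpace ℝ (Fin n) →L[ℝ] EuclideanSpace ℝ (Fin n)))
    (hhess : ∀ x, HasFDerivAt gP (hessP x) x)
    (hlipHess : ∀ a b, ‖hessP a - hessP b‖ ≤ HL * ‖a - b‖)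
    (x g s : EuclideanSpace ℝ (Fin n))
    (H : EuclideanSpace ℝ (Fin n) →L[ℝ] EuclideanSpace ℝ (Fin n))
    (hpd : ∀ v : EuclideanSpace ℝ (Fin n), (μ / 2) * ‖v‖ ^ 2 ≤ ⟪v, H v⟫)
    (hgerr : ‖gP x - g‖ ≤ C1 * ‖s‖ ^ 2)
    (hHerr : ‖hessP x - H‖ ≤ C2 * ‖s‖)
    (hnewton : H s = -g)
    (hsmall : (8 / μ ^ 2) * C1 ^ 2 * ‖s‖ ^ 2 ≤ 1 / 2) :
    ‖gP (x + s)‖ ≤ (16 / μ ^ 2) * (HL / 2 + C1 + C2) * ‖gP x‖ ^ 2 := by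
  have hstep : ‖gP (x + s)‖ ≤ (HL / 2 + C1 + C2) * ‖s‖ ^ 2 :=
    calc ‖gP (x + s)‖ ≤ ‖gP (x + s) - gP x - hessP x s‖ + ‖gP x - g‖ + ‖hessP x - H‖ * ‖s‖ :=
          norm_le_of_newton_step _ _ _ _ _ s hnewton
      _ ≤ HL / 2 * ‖s‖ ^ 2 + C1 * ‖s‖ ^ 2 + C2 * ‖s‖ * ‖s‖ := by
          gcongr
          exact norm_sub_sub_fderiv_le_of_lipschitz hhess hlipHess x s
      _ = (HL / 2 + C1 + C2) * ‖s‖ ^ 2 := by ring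
  have hg : μ / 2 * ‖s‖ ≤ ‖gP x‖ + C1 * ‖s‖ ^ 2 := by
    have := mul_norm_le_norm_apply_of_coercive hpd s
    rw [hnewton, norm_neg] at this
    linarith [norm_le_norm_add_norm_sub' g (gP x), norm_sub_rev g (gP x)]
  have hC1s : 4 * (C1 * ‖s‖) ≤ μ := by
    refine (pow_le_pow_iff_left₀ (by positivity) hμ.le two_ne_zero).1 ?_
    rw [div_mul_eq_mul_div, div_mul_eq_mul_div, div_le_iff₀ (by positivity)] at hsmall
    linarith
  have hs : μ / 4 * ‖s‖ ≤ ‖gP x‖ := by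
    linarith [mul_le_mul_of_nonneg_right hC1s (norm_nonneg s)]
  have hs_sq : ‖s‖ ^ 2 ≤ 16 / μ ^ 2 * ‖gP x‖ ^ 2 := by
    rw [div_mul_eq_mul_div, le_div_iff₀ (by positivity)]
    nlinarith [pow_le_pow_left₀ (by positivity) hs 2]
  calc ‖gP (x + s)‖ ≤ (HL / 2 + C1 + C2) * ‖s‖ ^ 2 := hstep
    _ ≤ (HL / 2 + C1 + C2) * (16 / μ ^ 2 * ‖gP x‖ ^ 2) := by gcongr
    _ = (16 / μ ^ 2) * (HL / 2 + C1 + C2) * ‖gP x‖ ^ 2 := by ring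

/-- Quadratic convergence of the inexact Newton step: if `P` has `H_L`-Lipschitz
Hessian, `‖∇P(x) − g‖ ≤ C₁‖s‖²`, `‖∇²P(x) − H‖ ≤ C₂‖s‖`, `H ⪰ (μ/2)I`, `s = −H⁻¹g`, and
`(8/μ²)C₁²‖s‖² ≤ 1/2`, then `‖∇P(x+s)‖ ≤ (16/μ²)(H_L/2 + C₁ + C₂)‖∇P(x)‖²`. -/
theorem stmt19 {n : ℕ} (HL C1 C2 μ : ℝ)
    (hHL : 0 < HL) (hC1 : 0 ≤ C1) (hC2 : 0 ≤ C2) (hμ : 0 < μ)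
    (P : EuclideanSpace ℝ (Fin n) → ℝ)
    (gP : EuclideanSpace ℝ (Fin n) → EuclideanSpace ℝ (Fin n))
    (hessP : EuclideanSpace ℝ (Fin n) → (EuclideanSpace ℝ (Fin n) →L[ℝ] EuclideanSpace ℝ (Fin n)))
    (hgrad : ∀ x, HasGradientAt P (gP x) x)
    (hhess : ∀ x, HasFDerivAt gP (hessP x) x)
    (hlipHess : ∀ a b, ‖hessP a - hessP b‖ ≤ HL * ‖a - b‖)
    (x g s : EuclideanSpace ℝ (Fin n))
    (H : EuclideanSpace ℝ (Fin n) →L[ℝ] EuclideanSpace ℝ (Fin n)) (hsa : IsSelfAdjoint H)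
    (hpd : ∀ v : EuclideanSpace ℝ (Fin n), (μ / 2) * ‖v‖ ^ 2 ≤ ⟪v, H v⟫)
    (hgerr : ‖gP x - g‖ ≤ C1 * ‖s‖ ^ 2)
    (hHerr : ‖hessP x - H‖ ≤ C2 * ‖s‖)
    (hnewton : H s = -g)
    (hsmall : (8 / μ ^ 2) * C1 ^ 2 * ‖s‖ ^ 2 ≤ 1 / 2) :
    ‖gP (x + s)‖ ≤ (16 / μ ^ 2) * (HL / 2 + C1 + C2) * ‖gP x‖ ^ 2 :=
  stmt19_general HL C1 C2 μ hHL hC1 hC2 hμ gP hessP hhess hlipHess x g s H hpd hgerr hHerr hnewton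
    hsmall
end
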